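/- Let u, v, λ, D, B, N₀, P^S, P^C be positive real numbers and set h = 1/u + 1/v. Define for t > 0 the total expected energy E^sum(t) = N₀B(e^{D·ln2/(B t)} − 1)(e^{ut} − 1) + P^S( h e^{ut} + u/(v(u+v+λ)) − h ) + P^C( h e^{ut} + 1/λ + u/(v(u+v+λ)) − h ). Then E^sum is convex on the interval (0, √(D·ln2/(B u))) and strictly monotonically increasing on [√(D·ln2/(B u)), +∞). -/

import Mathlib

/-!
With `K = D ln 2 / B`, the energy is `N₀B · g(t) + (P^S + P^C) h e^{ut} + const`, where
`g(t) = (e^{K/t} - 1)(e^{ut} - 1)`; the middle term is convex and strictly increasing, so it suffices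
that `g` is convex for `t ≤ √(K/u)` and monotone for `t ≥ √(K/u)`. Put `a = K/t` and `b = ut`, so
that `t ≤ √(K/u)` iff `b ≤ a`. Then `t g'(t) = b e^b (e^a - 1) - a e^a (e^b - 1)`, which is
nonnegative for `a ≤ b` because `x e^x / (e^x - 1)` is increasing (`(1 - e^{-x}) / x` is a secant
slope of the convex `e^{-x}`), and `t² g''(t) = (2a + a²) e^a (e^b - 1) + (e^a - 1) b² e^b - 2ab e^a e^b`,
which is nonnegative for `b ≤ a` by `e^x ≥ 1 + x`.
-/

open Real Set

noncomputable def Esum (u v lam D B N0 PS PC : ℝ) (t : ℝ) : ℝ :=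
  let h := 1 / u + 1 / v
  N0 * B * (Real.exp (D * Real.log 2 / (B * t)) - 1) * (Real.exp (u * t) - 1)
    + PS * (h * Real.exp (u * t) + u / (v * (u + v + lam)) - h)
    + PC * (h * Real.exp (u * t) + 1 / lam + u / (v * (u + v + lam)) - h)

lemma mul_exp_mul_exp_sub_one_le {a b : ℝ} (ha : 0 < a) (hab : a ≤ b) :
    a * exp a * (exp b - 1) ≤ b * exp b * (exp a - 1) := by
  have hb : 0 < b := ha.trans_le hab
  have hslope := (convexOn_exp.comp_linearMap (-LinearMap.id : ℝ →ₗ[ℝ] ℝ)).secant_mono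
    (mem_univ 0) (mem_univ a) (mem_univ b) ha.ne' hb.ne' hab
  simp only [Function.comp_apply, LinearMap.neg_apply, LinearMap.id_apply, neg_zero, exp_zero,
    sub_zero, exp_neg] at hslope
  rw [div_le_div_iff₀ ha hb] at hslope
  field_simp at hslope
  nlinarith [exp_pos a, exp_pos b]

lemma two_mul_mul_exp_mul_exp_le {a b : ℝ} (hb : 0 < b) (hba : b ≤ a) :
    2 * a * b * (exp a * exp b) ≤
      (2 * a + a ^ 2) * exp a * (exp b - 1) + (exp a - 1) * (b ^ 2 * exp b) := by
  have ha : 0 < a := hb.trans_le hba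
  have hx : 0 ≤ exp a - (1 + a) := by linarith [add_one_le_exp a]
  have hy : 0 ≤ exp b - (1 + b) := by linarith [add_one_le_exp b]
  have hL : 0 ≤ 2 * a + (a - b) ^ 2 := by positivity
  nlinarith [mul_nonneg hx (by positivity : 0 ≤ b ^ 2 + b * (a - b) ^ 2),
    mul_nonneg hx (mul_nonneg hy hL),
    mul_nonneg hy (by nlinarith : 0 ≤ (1 + a) * (2 * a + (a - b) ^ 2) - b ^ 2),
    mul_nonneg (mul_nonneg (mul_nonneg ha.le hb.le) (sub_nonneg.2 hba))
      (by linarith : 0 ≤ 1 + a - b)]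

lemma hasDerivAt_exp_div (K : ℝ) {t : ℝ} (ht : t ≠ 0) :
    HasDerivAt (fun t => exp (K / t)) (-(K / t ^ 2) * exp (K / t)) t :=
  ((hasDerivAt_inv ht).const_mul K).exp.congr_deriv (by ring_nf)

lemma hasDerivAt_exp_mul (u t : ℝ) :
    HasDerivAt (fun t => exp (u * t)) (u * exp (u * t)) t :=
  ((hasDerivAt_id t).const_mul u).exp.congr_deriv (by simp [mul_comm])

lemma hasDerivAt_div_sq (K : ℝ) {t : ℝ} (ht : t ≠ 0) :
    HasDerivAt (fun t => K / t ^ 2) (-(2 * K / t ^ 3)) t :=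
  ((hasDerivAt_const t K).div (hasDerivAt_pow 2 t) (pow_ne_zero 2 ht)).congr_deriv
    (by field_simp; norm_num; ring)

noncomputable def transmitEnergy (K u t : ℝ) : ℝ := (exp (K / t) - 1) * (exp (u * t) - 1)

section transmitEnergy

variable {K u t : ℝ}

lemma hasDerivAt_transmitEnergy (ht : t ≠ 0) :
    HasDerivAt (transmitEnergy K u)
      (u * exp (u * t) * (exp (K / t) - 1) - K / t ^ 2 * exp (K / t) * (exp (u * t) - 1)) t :=
  (((hasDerivAt_exp_div K ht).sub_const 1).mul ((hasDerivAt_exp_mul u t).sub_const 1)).congr_deriv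
    (by ring)

lemma hasDerivAt_deriv_transmitEnergy (ht : t ≠ 0) :
    HasDerivAt
      (fun t => u * exp (u * t) * (exp (K / t) - 1) - K / t ^ 2 * exp (K / t) * (exp (u * t) - 1))
      (((2 * (K / t) + (K / t) ^ 2) * exp (K / t) * (exp (u * t) - 1)
        + (exp (K / t) - 1) * ((u * t) ^ 2 * exp (u * t))
        - 2 * (K / t) * (u * t) * (exp (K / t) * exp (u * t))) / t ^ 2) t := by
  have hE := hasDerivAt_exp_mul u t
  have hF := hasDerivAt_exp_div K ht
  refine (((hE.const_mul u).mul (hF.sub_const 1)).sub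
    (((hasDerivAt_div_sq K ht).mul hF).mul (hE.sub_const 1))).congr_deriv ?_
  simp only [Pi.mul_apply]
  field_simp
  ring

lemma mul_lt_div_of_lt_sqrt (hu : 0 < u) (ht : 0 < t) (hts : t < √(K / u)) : u * t < K / t := by
  rw [lt_sqrt ht.le, lt_div_iff₀ hu] at hts
  rw [lt_div_iff₀ ht]
  linarith

lemma div_le_mul_of_sqrt_le (hu : 0 < u) (ht : 0 < t) (hts : √(K / u) ≤ t) : K / t ≤ u * t := by
  rw [sqrt_le_left ht.le, div_le_iff₀ hu] at hts
  rw [div_le_iff₀ ht]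
  linarith

lemma convexOn_transmitEnergy (hu : 0 < u) :
    ConvexOn ℝ (Ioo 0 √(K / u)) (transmitEnergy K u) := by
  refine convexOn_of_hasDerivWithinAt2_nonneg (convex_Ioo _ _)
    (fun t ht => (hasDerivAt_transmitEnergy ht.1.ne').continuousAt.continuousWithinAt)
    (fun t ht => (hasDerivAt_transmitEnergy ?_).hasDerivWithinAt)
    (fun t ht => (hasDerivAt_deriv_transmitEnergy ?_).hasDerivWithinAt) ?_
  all_goals simp only [interior_Ioo] at *
  · exact ht.1.ne'
  · exact ht.1.ne'
  rintro t ⟨ht, hts⟩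
  have := two_mul_mul_exp_mul_exp_le (mul_pos hu ht) (mul_lt_div_of_lt_sqrt hu ht hts).le
  exact div_nonneg (by linarith) (sq_nonneg t)

lemma monotoneOn_transmitEnergy (hK : 0 < K) (hu : 0 < u) :
    MonotoneOn (transmitEnergy K u) (Ici √(K / u)) := by
  have hs : 0 < √(K / u) := sqrt_pos.2 (div_pos hK hu)
  refine monotoneOn_of_hasDerivWithinAt_nonneg (convex_Ici _)
    (fun t ht => (hasDerivAt_transmitEnergy (hs.trans_le ht).ne').continuousAt.continuousWithinAt)
    (fun t ht => (hasDerivAt_transmitEnergy ?_).hasDerivWithinAt) ?_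
  all_goals simp only [interior_Ici] at *
  · exact (hs.trans ht).ne'
  intro t hts
  have ht := hs.trans hts
  have := mul_exp_mul_exp_sub_one_le (div_pos hK ht) (div_le_mul_of_sqrt_le hu ht hts.le)
  have hderiv : u * exp (u * t) * (exp (K / t) - 1) - K / t ^ 2 * exp (K / t) * (exp (u * t) - 1)
      = (u * t * exp (u * t) * (exp (K / t) - 1) - K / t * exp (K / t) * (exp (u * t) - 1)) / t := by
    field_simp
  rw [hderiv]
  exact div_nonneg (by linarith) ht.le

end transmitEnergy

lemma Esum_eq (u v lam D B N0 PS PC : ℝ) :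
    Esum u v lam D B N0 PS PC = fun t => N0 * B * transmitEnergy (D * log 2 / B) u t
      + (PS + PC) * (1 / u + 1 / v) * exp (u * t)
      + (PS * (u / (v * (u + v + lam)) - (1 / u + 1 / v))
        + PC * (1 / lam + u / (v * (u + v + lam)) - (1 / u + 1 / v))) := by
  funext t
  simp only [Esum, transmitEnergy, div_div]
  ring

theorem statement16_general (u v lam D B N0 PS PC : ℝ) (hu : 0 < u) (hv : 0 < v)
    (hD : 0 < D) (hB : 0 < B) (hN0 : 0 < N0) (hPS : 0 < PS)
    (hPC : 0 < PC) :
    ConvexOn ℝ (Ioo 0 (Real.sqrt (D * Real.log 2 / (B * u))))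
      (Esum u v lam D B N0 PS PC) ∧
    StrictMonoOn (Esum u v lam D B N0 PS PC)
      (Ici (Real.sqrt (D * Real.log 2 / (B * u)))) := by
  have hK : 0 < D * log 2 / B := div_pos (mul_pos hD (log_pos one_lt_two)) hB
  have hc₁ : 0 ≤ N0 * B := (mul_pos hN0 hB).le
  have hc₂ : 0 < (PS + PC) * (1 / u + 1 / v) := by positivity
  have hexp : StrictMono fun t => exp (u * t) :=
    exp_strictMono.comp (strictMono_mul_left_of_pos hu)
  rw [Esum_eq, ← div_div (D * log 2) B u]
  constructor
  · exact (((convexOn_transmitEnergy hu).smul hc₁).add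
      (((convexOn_exp.comp_linearMap (LinearMap.lsmul ℝ ℝ u)).subset (subset_univ _)
        (convex_Ioo _ _)).smul hc₂.le)).add_const _
  · exact (((monotone_mul_left_of_nonneg hc₁).comp_monotoneOn
      (monotoneOn_transmitEnergy hK hu)).add_strictMono
        ((hexp.const_mul hc₂).strictMonoOn _)).add_const _

theorem statement16 (u v lam D B N0 PS PC : ℝ) (hu : 0 < u) (hv : 0 < v)
    (hlam : 0 < lam) (hD : 0 < D) (hB : 0 < B) (hN0 : 0 < N0) (hPS : 0 < PS)
    (hPC : 0 < PC) :
    ConvexOn ℝ (Ioo 0 (Real.sqrt (D * Real.log 2 / (B * u))))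
      (Esum u v lam D B N0 PS PC) ∧
    StrictMonoOn (Esum u v lam D B N0 PS PC)
      (Ici (Real.sqrt (D * Real.log 2 / (B * u)))) :=
  statement16_general u v lam D B N0 PS PC hu hv hD hB hN0 hPS hPC
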